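/- arXiv:math/0505445 — 2 statements merged into one kernel-verified Lean document; each statement's English description precedes it below -/
import Mathlib

section
/- If R is right small injective, then every principal small left ideal of R is a left annihilator: for a ∈ J(R), Ra = l(r(a)). -/
/-- A right ideal `I` of `R` (viewed as a submodule of `R` over `Rᵐᵒᵖ`) is small if
`I + K ≠ R` for every proper right ideal `K`. -/
def IsSmallRightIdeal {R : Type*} [Ring R] (I : Submodule Rᵐᵒᵖ R) : Prop :=
  ∀ K : Submodule Rᵐᵒᵖ R, I ⊔ K = ⊤ → K = ⊤

/-- A right `R`-module `M` is small injective if every `R`-homomorphism from a small right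
ideal of `R` to `M` extends to a homomorphism `R → M`. -/
def SmallInjective (R : Type*) [Ring R] (M : Type*) [AddCommGroup M] [Module Rᵐᵒᵖ M] : Prop :=
  ∀ I : Submodule Rᵐᵒᵖ R, IsSmallRightIdeal I → ∀ f : I →ₗ[Rᵐᵒᵖ] M,
    ∃ g : R →ₗ[Rᵐᵒᵖ] M, ∀ x : I, g x = f x


/-- The left annihilator `l(X) = {r : r * x = 0 ∀ x ∈ X}` of a subset `X ⊆ R`,
as a left ideal of `R`. -/
def leftAnn (R : Type*) [Ring R] (X : Set R) : Submodule R R where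
  carrier := {r | ∀ x ∈ X, r * x = 0}
  add_mem' := by
    intro a b ha hb x hx
    rw [add_mul, ha x hx, hb x hx, add_zero]
  zero_mem' := by intro x hx; rw [zero_mul]
  smul_mem' := by
    intro c a ha x hx
    show c * a * x = 0
    rw [mul_assoc, ha x hx, mul_zero]

/-- The right annihilator `r(X) = {r : x * r = 0 ∀ x ∈ X}` of a subset `X ⊆ R`,
as a right ideal of `R`. -/
def rightAnn (R : Type*) [Ring R] (X : Set R) : Submodule Rᵐᵒᵖ R where
  carrier := {r | ∀ x ∈ X, x * r = 0}
  add_mem' := by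
    intro a b ha hb x hx
    rw [mul_add, ha x hx, hb x hx, add_zero]
  zero_mem' := by intro x hx; rw [mul_zero]
  smul_mem' := by
    intro c a ha x hx
    show x * (a * c.unop) = 0
    rw [← mul_assoc, ha x hx, zero_mul]

/-!
For `b ∈ l(r(a))` the kernel of `c ↦ a * c` is contained in that of `c ↦ b * c`, so
`a * c ↦ b * c` is a well-defined homomorphism of right ideals `aR → R`. Since `a ∈ J(R)`,
every `1 - a * c` is a unit, which makes `aR` small. Small injectivity extends the map to
left multiplication by some `d ∈ R`, and evaluating at `a` gives `b = d * a ∈ Ra`.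
-/

open MulOpposite

namespace Ideal

variable {R : Type*} [Ring R]

theorem exists_mul_one_add_eq_one_of_mem_jacobson_bot {x : R}
    (hx : x ∈ (⊥ : Ideal R).jacobson) : ∃ z, z * (1 + x) = 1 := by
  obtain ⟨z, hz⟩ := mem_jacobson_iff.1 hx 1
  exact ⟨z, by rwa [mem_bot, sub_eq_zero, mul_one, add_comm, ← mul_one_add] at hz⟩

theorem isUnit_one_add_of_mem_jacobson_bot {x : R} (hx : x ∈ (⊥ : Ideal R).jacobson) :
    IsUnit (1 + x) := by
  obtain ⟨z, hz⟩ := exists_mul_one_add_eq_one_of_mem_jacobson_bot hx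
  -- `z = 1 - z * x` is again of the form `1 + J(R)`, so it has a left inverse too.
  have hzJ : z - 1 ∈ (⊥ : Ideal R).jacobson := by
    have : z - 1 = -(z * x) := by rw [← hz]; noncomm_ring
    exact this ▸ neg_mem (mul_mem_left _ z hx)
  obtain ⟨w, hw⟩ := exists_mul_one_add_eq_one_of_mem_jacobson_bot hzJ
  rw [add_sub_cancel] at hw
  have hw_eq : w = 1 + x := left_inv_eq_right_inv hw hz
  exact isUnit_iff_exists.2 ⟨z, hw_eq ▸ hw, hz⟩

theorem isUnit_one_sub_mul_of_mem_jacobson_bot {a : R} (ha : a ∈ (⊥ : Ideal R).jacobson)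
    (c : R) : IsUnit (1 - a * c) := by
  have : (⊥ : Ideal R).jacobson.IsTwoSided := jacobson_bot (R := R) ▸ inferInstance
  rw [sub_eq_add_neg]
  exact isUnit_one_add_of_mem_jacobson_bot (neg_mem (mul_mem_right c _ ha))

end Ideal

section RightIdeals

variable {R : Type*} [Ring R]

theorem rightIdeal_eq_top_of_isUnit_mem {K : Submodule Rᵐᵒᵖ R} {u : R} (hu : IsUnit u)
    (huK : u ∈ K) : K = ⊤ := by
  obtain ⟨u, rfl⟩ := hu
  refine Submodule.eq_top_iff'.2 fun y => ?_
  have : op (↑u⁻¹ * y) • (u : R) = y := by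
    rw [op_smul_eq_mul, ← mul_assoc, Units.mul_inv, one_mul]
  exact this ▸ K.smul_mem _ huK

theorem isSmallRightIdeal_of_forall_isUnit_one_sub {I : Submodule Rᵐᵒᵖ R}
    (hI : ∀ x ∈ I, IsUnit (1 - x)) : IsSmallRightIdeal I := by
  intro K hK
  obtain ⟨x, hx, k, hk, hxk⟩ := Submodule.mem_sup.1 (hK ▸ Submodule.mem_top : (1 : R) ∈ I ⊔ K)
  rw [eq_sub_of_add_eq' hxk] at hk
  exact rightIdeal_eq_top_of_isUnit_mem (hI x hx) hk

theorem isSmallRightIdeal_range_toSpanSingleton {a : R} (ha : a ∈ (⊥ : Ideal R).jacobson) :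
    IsSmallRightIdeal (LinearMap.range (LinearMap.toSpanSingleton Rᵐᵒᵖ R a)) := by
  refine isSmallRightIdeal_of_forall_isUnit_one_sub ?_
  rintro _ ⟨c, rfl⟩
  exact Ideal.isUnit_one_sub_mul_of_mem_jacobson_bot ha c.unop

theorem LinearMap.apply_eq_apply_one_mul (g : R →ₗ[Rᵐᵒᵖ] R) (x : R) : g x = g 1 * x := by
  simpa using g.map_smul (op x) 1

end RightIdeals

theorem LinearMap.exists_comp_rangeRestrict_eq_of_ker_le {S M N P : Type*} [Ring S]
    [AddCommGroup M] [AddCommGroup N] [AddCommGroup P] [Module S M] [Module S N] [Module S P]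
    {f : M →ₗ[S] N} {g : M →ₗ[S] P} (h : ker f ≤ ker g) :
    ∃ φ : range f →ₗ[S] P, ∀ m, φ (f.rangeRestrict m) = g m :=
  ⟨(ker f).liftQ g h ∘ₗ f.quotKerEquivRange.symm.toLinearMap, fun m => by
    change (ker f).liftQ g h (f.quotKerEquivRange.symm ⟨f m, mem_range_self f m⟩) = g m
    rw [quotKerEquivRange_symm_apply_image]
    rfl⟩

section Annihilators

variable {R : Type*} [Ring R]

theorem span_le_leftAnn_rightAnn (X : Set R) :
    Submodule.span R X ≤ leftAnn R (rightAnn R X) :=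
  Submodule.span_le.2 fun x hx _ hy => hy x hx

theorem ker_toSpanSingleton_le_of_mem_leftAnn {a b : R}
    (hb : b ∈ leftAnn R (rightAnn R {a})) :
    LinearMap.ker (LinearMap.toSpanSingleton Rᵐᵒᵖ R a) ≤
      LinearMap.ker (LinearMap.toSpanSingleton Rᵐᵒᵖ R b) := fun c hc =>
  hb c.unop fun _ hx => hx ▸ hc

theorem mem_span_singleton_of_mem_leftAnn_of_isSmallRightIdeal (hR : SmallInjective R R)
    {a b : R} (ha : IsSmallRightIdeal (LinearMap.range (LinearMap.toSpanSingleton Rᵐᵒᵖ R a)))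
    (hb : b ∈ leftAnn R (rightAnn R {a})) : b ∈ Submodule.span R {a} := by
  obtain ⟨φ, hφ⟩ := LinearMap.exists_comp_rangeRestrict_eq_of_ker_le
    (f := LinearMap.toSpanSingleton Rᵐᵒᵖ R a) (g := LinearMap.toSpanSingleton Rᵐᵒᵖ R b)
    (ker_toSpanSingleton_le_of_mem_leftAnn hb)
  obtain ⟨g, hg⟩ := hR _ ha φ
  have hga : g a = b := by
    rw [← LinearMap.toSpanSingleton_apply_one Rᵐᵒᵖ R a]
    exact ((hg _).trans (hφ 1)).trans (LinearMap.toSpanSingleton_apply_one Rᵐᵒᵖ R b)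
  exact Submodule.mem_span_singleton.2
    ⟨g 1, by rw [smul_eq_mul, ← g.apply_eq_apply_one_mul, hga]⟩

end Annihilators

/-- If `R` is right small injective, then every principal small left ideal is a left
annihilator: for `a ∈ J(R)`, `Ra = l(r(a))`. -/
theorem stmt_8 {R : Type*} [Ring R] (h : SmallInjective R R)
    (a : R) (ha : a ∈ (⊥ : Ideal R).jacobson) :
    Submodule.span R ({a} : Set R) = leftAnn R ↑(rightAnn R ({a} : Set R)) :=
  le_antisymm (span_le_leftAnn_rightAnn _) fun _ hb =>
    mem_span_singleton_of_mem_leftAnn_of_isSmallRightIdeal h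
      (isSmallRightIdeal_range_toSpanSingleton ha) hb
end

section
/- If R is right small injective and right Kasch, then rl(I) = I for every small right ideal I of R. -/
/-- `R` is right Kasch if every simple right `R`-module embeds in `R` as a right module. -/
def RightKasch (R : Type u) [Ring R] : Prop :=
  ∀ (M : Type u) [AddCommGroup M] [Module Rᵐᵒᵖ M], IsSimpleModule Rᵐᵒᵖ M →
    ∃ f : M →ₗ[Rᵐᵒᵖ] R, Function.Injective f

/-!
Small right ideals are exactly the right ideals inside the Jacobson radical `J`. In a right Kasch
ring every maximal right ideal is `r(c)` for some `c`, and `c ∈ l(I)` when it contains `I`; hence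
`rl(I) ⊆ J` whenever `I ⊆ J`. So for `a ∈ rl(I) \ I` the right ideal `N = I + aR` is small, and the
nonzero cyclic module `N / I` has a simple quotient, which embeds in `R`. This gives
`γ : N → R` vanishing on `I` with `γ a ≠ 0`. Small injectivity makes `γ` a left multiplication by
some `c`, so `c ∈ l(I)` and `γ a = c a = 0`, a contradiction.
-/

open MulOpposite Submodule

instance Module.Finite.self_mulOpposite (R : Type*) [Semiring R] : Module.Finite Rᵐᵒᵖ R :=
  Module.Finite.of_surjective (LinearMap.toSpanSingleton Rᵐᵒᵖ R 1) fun r => ⟨op r, one_mul r⟩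

theorem isSmallRightIdeal_iff_le_jacobson {R : Type*} [Ring R] {I : Submodule Rᵐᵒᵖ R} :
    IsSmallRightIdeal I ↔ I ≤ Module.jacobson Rᵐᵒᵖ R := by
  constructor
  · refine fun hI => le_sInf fun M hM => ?_
    by_contra hIM
    exact hM.1 (hI M (hM.2 _ (right_lt_sup.mpr hIM)))
  · intro hI K hK
    by_contra hK_ne
    obtain ⟨M, hM, hKM⟩ := (eq_top_or_exists_le_coatom K).resolve_left hK_ne
    exact hM.1 (top_le_iff.mp (hK ▸ sup_le (hI.trans (sInf_le hM)) hKM))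

theorem LinearMap.apply_eq_op_smul_apply_one {R M : Type*} [Semiring R] [AddCommMonoid M]
    [Module Rᵐᵒᵖ M] (f : R →ₗ[Rᵐᵒᵖ] M) (x : R) : f x = op x • f 1 := by
  rw [← map_smul, op_smul_eq_mul, one_mul]

theorem SmallInjective.exists_eq_mul {R : Type*} [Ring R] (h : SmallInjective R R)
    {N : Submodule Rᵐᵒᵖ R} (hN : IsSmallRightIdeal N) (f : N →ₗ[Rᵐᵒᵖ] R) :
    ∃ c : R, ∀ x : N, f x = c * x := by
  obtain ⟨g, hg⟩ := h N hN f
  exact ⟨g 1, fun x => by rw [← hg, g.apply_eq_op_smul_apply_one, op_smul_eq_mul]⟩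

theorem mem_rightAnn_singleton {R : Type*} [Ring R] {c x : R} :
    x ∈ rightAnn R {c} ↔ c * x = 0 := by
  simp [rightAnn]

theorem RightKasch.exists_rightAnn_eq {R : Type u} [Ring R] (hk : RightKasch R)
    {M : Submodule Rᵐᵒᵖ R} (hM : IsCoatom M) : ∃ c : R, rightAnn R {c} = M := by
  obtain ⟨σ, hσ⟩ := hk (R ⧸ M) (isSimpleModule_iff_isCoatom.mpr hM)
  refine ⟨σ (M.mkQ 1), Submodule.ext fun x => ?_⟩
  have hσx : σ (M.mkQ x) = σ (M.mkQ 1) * x := (σ.comp M.mkQ).apply_eq_op_smul_apply_one x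
  rw [mem_rightAnn_singleton, ← hσx, map_eq_zero_iff σ hσ, mkQ_apply, Quotient.mk_eq_zero]

theorem RightKasch.rightAnn_leftAnn_le_jacobson {R : Type u} [Ring R] (hk : RightKasch R)
    {I : Submodule Rᵐᵒᵖ R} (hI : I ≤ Module.jacobson Rᵐᵒᵖ R) :
    rightAnn R (leftAnn R I) ≤ Module.jacobson Rᵐᵒᵖ R := by
  refine fun a ha => mem_sInf.mpr fun M hM => ?_
  obtain ⟨c, rfl⟩ := hk.exists_rightAnn_eq hM
  have hc : c ∈ leftAnn R I := fun x hx => mem_rightAnn_singleton.mp (sInf_le hM (hI hx))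
  exact mem_rightAnn_singleton.mpr (ha c hc)

theorem Submodule.exists_isCoatom_le_of_notMem {S X : Type*} [Semiring S] [AddCommMonoid X]
    [Module S X] {K : Submodule S X} {m : X} (hm : m ∉ K) (hK : K ⊔ span S {m} = ⊤) :
    ∃ P : Submodule S X, IsCoatom P ∧ K ≤ P ∧ m ∉ P := by
  obtain ⟨P, hKP, hP⟩ := zorn_le_nonempty₀ {P : Submodule S X | m ∉ P}
    (fun c hc hchain Q hQ => ⟨sSup c, fun hmc => by
      obtain ⟨Q', hQ'c, hmQ'⟩ := (mem_sSup_of_directed ⟨Q, hQ⟩ hchain.directedOn).mp hmc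
      exact hc hQ'c hmQ', fun _ => le_sSup⟩) K hm
  refine ⟨P, ⟨fun hP_top => hP.prop (hP_top ▸ mem_top), fun Q hPQ => ?_⟩, hKP, hP.prop⟩
  have hmQ : m ∈ Q := by
    by_contra hmQ
    exact hPQ.ne (hP.eq_of_le hmQ hPQ.le)
  exact top_le_iff.mp (hK ▸ sup_le (hKP.trans hPQ.le) ((span_singleton_le_iff_mem m Q).mpr hmQ))

theorem RightKasch.exists_linearMap_le_ker_of_notMem {R : Type u} [Ring R] (hk : RightKasch R)
    {X : Type u} [AddCommGroup X] [Module Rᵐᵒᵖ X] {K : Submodule Rᵐᵒᵖ X} {m : X}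
    (hm : m ∉ K) (hK : K ⊔ span Rᵐᵒᵖ {m} = ⊤) :
    ∃ γ : X →ₗ[Rᵐᵒᵖ] R, K ≤ LinearMap.ker γ ∧ m ∉ LinearMap.ker γ := by
  obtain ⟨P, hP, hKP, hmP⟩ := exists_isCoatom_le_of_notMem hm hK
  obtain ⟨σ, hσ⟩ := hk (X ⧸ P) (isSimpleModule_iff_isCoatom.mpr hP)
  have hker : LinearMap.ker (σ.comp P.mkQ) = P := by
    rw [LinearMap.ker_comp_of_ker_eq_bot _ (LinearMap.ker_eq_bot.mpr hσ), ker_mkQ]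
  exact ⟨σ.comp P.mkQ, hker.symm ▸ hKP, hker.symm ▸ hmP⟩

/-- If `R` is right small injective and right Kasch, then `r(l(I)) = I` for every small
right ideal `I` of `R`. -/
theorem stmt_10 {R : Type u} [Ring R] (h : SmallInjective R R) (hk : RightKasch R)
    (I : Submodule Rᵐᵒᵖ R) (hI : IsSmallRightIdeal I) :
    rightAnn R ↑(leftAnn R ↑I) = I := by
  refine le_antisymm (fun a ha => ?_) fun x hx y hy => hy x hx
  by_contra haI
  have hIJ := isSmallRightIdeal_iff_le_jacobson.mp hI
  set N := I ⊔ span Rᵐᵒᵖ {a}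
  have haN : a ∈ N := mem_sup_right (mem_span_singleton_self a)
  have hN : IsSmallRightIdeal N := isSmallRightIdeal_iff_le_jacobson.mpr <| sup_le hIJ <|
    (span_singleton_le_iff_mem _ _).mpr (hk.rightAnn_leftAnn_le_jacobson hIJ ha)
  have hIN : I.comap N.subtype ⊔ span Rᵐᵒᵖ {⟨a, haN⟩} = ⊤ := by
    apply map_injective_of_injective N.injective_subtype
    rw [Submodule.map_sup, map_comap_subtype, map_subtype_span_singleton, map_subtype_top,
      inf_of_le_right le_sup_left]
  have haK : (⟨a, haN⟩ : N) ∉ I.comap N.subtype := haI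
  obtain ⟨γ, hγI, hγa⟩ := hk.exists_linearMap_le_ker_of_notMem haK hIN
  obtain ⟨c, hc⟩ := h.exists_eq_mul hN γ
  have hcI : c ∈ leftAnn R I := fun x hx => (hc ⟨x, mem_sup_left hx⟩).symm.trans (hγI hx)
  exact hγa ((hc _).trans (ha c hcI))
end
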